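/- arXiv:2010.03645 — 2 statements merged into one kernel-verified Lean document; each statement's English description precedes it below -/
import Mathlib

section
/- Let {λₙ} ⊂ 𝔻 be interpolating and {wₙ} ⊂ ℂ∖{0} bounded with limsup_n (1−|λₙ|)·|log|wₙ|| = ∞. Then every φ ∈ N⁺ with φ(λₙ) = wₙ for all n has a nontrivial Blaschke factor. -/
/-!
A zero-free Smirnov function `φ = f / g` has `(1 - |z|) |log |φ z||` bounded on the disc. For the
outer denominator `g = exp (P[W])` this is the bound `2 / (1 - |z|)` on the Herglotz kernel; for the
zero-free bounded numerator `f = exp h`, the real part of `h` is bounded above, so the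
Borel–Carathéodory theorem gives `|h z| = O(1 / (1 - |z|))`. Evaluated at the nodes `λₙ`, where
`φ = wₙ`, this contradicts `limsup (1 - |λₙ|) |log |wₙ|| = ∞`.
-/

open MeasureTheory Metric Set Filter Topology

noncomputable def poissonRep (W : ℝ → ℝ) (z : ℂ) : ℂ :=
  (2 * (Real.pi : ℂ))⁻¹ * ∫ t in (-Real.pi)..Real.pi,
    ((Complex.exp ((t : ℂ) * Complex.I) + z) / (Complex.exp ((t : ℂ) * Complex.I) - z)) * (W t : ℂ)

def IsOuterF (φ : ℂ → ℂ) : Prop :=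
  ∃ W : ℝ → ℝ, IntervalIntegrable W volume (-Real.pi) Real.pi ∧
    ∀ z ∈ Metric.ball (0 : ℂ) 1, φ z = Complex.exp (poissonRep W z)

def BoundedAnalytic (f : ℂ → ℂ) : Prop :=
  DifferentiableOn ℂ f (Metric.ball 0 1) ∧
    ∃ C : ℝ, ∀ z ∈ Metric.ball (0 : ℂ) 1, ‖f z‖ ≤ C

def MemSmirnov (φ : ℂ → ℂ) : Prop :=
  ∃ f g : ℂ → ℂ, BoundedAnalytic f ∧ BoundedAnalytic g ∧ IsOuterF g ∧
    ∀ z ∈ Metric.ball (0 : ℂ) 1, φ z = f z / g z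

def IsInterpolating (Λ : ℕ → ℂ) : Prop :=
  (∀ n, Λ n ∈ Metric.ball (0 : ℂ) 1) ∧ Function.Injective Λ ∧
  ∃ δ : ℝ, 0 < δ ∧ ∀ n : ℕ, δ ≤
    ∏' k : ℕ, if k = n then (1 : ℝ) else
      ‖(Λ k - Λ n) / (1 - (starRingEnd ℂ) (Λ k) * Λ n)‖

open Complex

theorem DifferentiableOn.exists_log_on_ball {f : ℂ → ℂ} {c : ℂ} {r : ℝ}
    (hf : DifferentiableOn ℂ f (ball c r)) (hf0 : ∀ z ∈ ball c r, f z ≠ 0) :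
    ∃ h : ℂ → ℂ, DifferentiableOn ℂ h (ball c r) ∧ ∀ z ∈ ball c r, Complex.exp (h z) = f z := by
  have hlogDeriv : DifferentiableOn ℂ (fun z ↦ _root_.deriv f z / f z) (ball c r) :=
    ((hf.analyticOnNhd isOpen_ball).deriv.differentiableOn).div hf hf0
  obtain ⟨h, hhc, hh⟩ := hlogDeriv.isExactOn_ball.with_val_at c (Complex.log (f c))
  have hhd : DifferentiableOn ℂ h (ball c r) := fun z hz ↦
    (hh z hz).differentiableAt.differentiableWithinAt
  refine ⟨h, hhd, fun z hz ↦ ?_⟩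
  have hderiv : ∀ y ∈ ball c r, HasDerivAt (fun y ↦ f y * Complex.exp (-h y)) 0 y := by
    intro y hy
    have hfy := (hf.differentiableAt (isOpen_ball.mem_nhds hy)).hasDerivAt
    refine (hfy.fun_mul (hh y hy).fun_neg.cexp).congr_deriv ?_
    field_simp [hf0 y hy]
    ring
  have hc : c ∈ ball c r := mem_ball_self (pos_of_mem_ball hz)
  have hconst : f z * Complex.exp (-h z) = f c * Complex.exp (-h c) :=
    isOpen_ball.is_const_of_deriv_eq_zero (convex_ball c r).isPreconnected
      (fun y hy ↦ (hderiv y hy).differentiableAt.differentiableWithinAt)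
      (fun y hy ↦ (hderiv y hy).deriv) hz hc
  rw [hhc, Complex.exp_neg, Complex.exp_neg, Complex.exp_log (hf0 c hc),
    mul_inv_cancel₀ (hf0 c hc), mul_inv_eq_one₀ (Complex.exp_ne_zero _)] at hconst
  exact hconst.symm

theorem one_sub_norm_mul_norm_le_of_re_le {h : ℂ → ℂ} {M : ℝ} (hM : 0 < M)
    (hh : DifferentiableOn ℂ h (ball 0 1)) (hre : ∀ z ∈ ball (0 : ℂ) 1, (h z).re ≤ M)
    {z : ℂ} (hz : z ∈ ball (0 : ℂ) 1) :
    (1 - ‖z‖) * ‖h z‖ ≤ 2 * M + 2 * ‖h 0‖ := by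
  have hz1 : ‖z‖ < 1 := mem_ball_zero_iff.mp hz
  have hBC := borelCaratheodory hM hh hre one_pos hz
  rw [← add_div, le_div_iff₀ (by linarith)] at hBC
  nlinarith [norm_nonneg (h 0), norm_nonneg z]

theorem norm_add_div_sub_le {ζ z : ℂ} (hζ : ‖ζ‖ = 1) (hz : ‖z‖ < 1) :
    ‖(ζ + z) / (ζ - z)‖ ≤ 2 / (1 - ‖z‖) := by
  rw [norm_div]
  apply div_le_div₀ zero_le_two _ (by linarith)
  · simpa [hζ] using norm_sub_norm_le ζ z
  · linarith [norm_add_le ζ z]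

theorem one_sub_norm_mul_norm_poissonRep_le {W : ℝ → ℝ}
    (hW : IntervalIntegrable W volume (-Real.pi) Real.pi) {z : ℂ} (hz : z ∈ ball (0 : ℂ) 1) :
    (1 - ‖z‖) * ‖poissonRep W z‖ ≤ Real.pi⁻¹ * ∫ t in (-Real.pi)..Real.pi, |W t| := by
  have hz1 : ‖z‖ < 1 := mem_ball_zero_iff.mp hz
  have hkernel : ∀ t : ℝ,
      ‖(Complex.exp (t * I) + z) / (Complex.exp (t * I) - z) * (W t : ℂ)‖
        ≤ 2 / (1 - ‖z‖) * |W t| := fun t ↦ by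
    rw [norm_mul, norm_real, Real.norm_eq_abs]
    exact mul_le_mul_of_nonneg_right
      (norm_add_div_sub_le (Complex.norm_exp_ofReal_mul_I t) hz1) (abs_nonneg _)
  have hint := intervalIntegral.norm_integral_le_of_norm_le (by linarith [Real.pi_pos])
    (Eventually.of_forall fun t _ ↦ hkernel t) (hW.abs.const_mul (2 / (1 - ‖z‖)))
  rw [intervalIntegral.integral_const_mul] at hint
  have h2pi : ‖(2 * (Real.pi : ℂ))⁻¹‖ = (2 * Real.pi)⁻¹ := by
    rw [norm_inv, norm_mul, norm_real, Real.norm_of_nonneg Real.pi_pos.le, Complex.norm_two]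
  calc (1 - ‖z‖) * ‖poissonRep W z‖
      ≤ (1 - ‖z‖) * ((2 * Real.pi)⁻¹ * (2 / (1 - ‖z‖) * ∫ t in (-Real.pi)..Real.pi, |W t|)) := by
        rw [poissonRep, norm_mul, h2pi]
        gcongr
    _ = Real.pi⁻¹ * ∫ t in (-Real.pi)..Real.pi, |W t| := by
        field_simp [(by linarith : (1 - ‖z‖) ≠ 0)]

-- No side conditions are needed since `Real.log 0 = 0`.
theorem Real.abs_log_div_le (a b : ℝ) : |Real.log (a / b)| ≤ |Real.log a| + |Real.log b| := by
  rcases eq_or_ne a 0 with rfl | ha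
  · simp
  rcases eq_or_ne b 0 with rfl | hb
  · simp
  rw [Real.log_div ha hb]
  exact abs_sub _ _

def HasBoundedLogGrowth (φ : ℂ → ℂ) : Prop :=
  ∃ K : ℝ, ∀ z ∈ ball (0 : ℂ) 1, (1 - ‖z‖) * |Real.log ‖φ z‖| ≤ K

namespace HasBoundedLogGrowth

theorem congr {φ ψ : ℂ → ℂ} (hφ : HasBoundedLogGrowth φ) (h : EqOn φ ψ (ball 0 1)) :
    HasBoundedLogGrowth ψ := by
  obtain ⟨K, hK⟩ := hφ
  exact ⟨K, fun z hz ↦ h hz ▸ hK z hz⟩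

theorem exp_comp {h : ℂ → ℂ} {K : ℝ} (hK : ∀ z ∈ ball (0 : ℂ) 1, (1 - ‖z‖) * ‖h z‖ ≤ K) :
    HasBoundedLogGrowth (fun z ↦ Complex.exp (h z)) := by
  refine ⟨K, fun z hz ↦ le_trans ?_ (hK z hz)⟩
  rw [Complex.norm_exp, Real.log_exp]
  gcongr
  · linarith [mem_ball_zero_iff.mp hz]
  · exact abs_re_le_norm (h z)

theorem div {f g : ℂ → ℂ} (hf : HasBoundedLogGrowth f) (hg : HasBoundedLogGrowth g) :
    HasBoundedLogGrowth (fun z ↦ f z / g z) := by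
  obtain ⟨Kf, hKf⟩ := hf
  obtain ⟨Kg, hKg⟩ := hg
  refine ⟨Kf + Kg, fun z hz ↦ ?_⟩
  have hz1 : 0 ≤ 1 - ‖z‖ := by linarith [mem_ball_zero_iff.mp hz]
  calc (1 - ‖z‖) * |Real.log ‖f z / g z‖|
      ≤ (1 - ‖z‖) * |Real.log ‖f z‖| + (1 - ‖z‖) * |Real.log ‖g z‖| := by
        rw [norm_div, ← mul_add]
        exact mul_le_mul_of_nonneg_left (Real.abs_log_div_le _ _) hz1
    _ ≤ Kf + Kg := add_le_add (hKf z hz) (hKg z hz)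

end HasBoundedLogGrowth

theorem IsOuterF.hasBoundedLogGrowth {g : ℂ → ℂ} (hg : IsOuterF g) : HasBoundedLogGrowth g := by
  obtain ⟨W, hW, hgW⟩ := hg
  exact (HasBoundedLogGrowth.exp_comp fun z hz ↦
    one_sub_norm_mul_norm_poissonRep_le hW hz).congr fun z hz ↦ (hgW z hz).symm

theorem BoundedAnalytic.hasBoundedLogGrowth {f : ℂ → ℂ} (hf : BoundedAnalytic f)
    (hf0 : ∀ z ∈ ball (0 : ℂ) 1, f z ≠ 0) : HasBoundedLogGrowth f := by
  obtain ⟨hfd, C, hC⟩ := hf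
  obtain ⟨h, hhd, hexp⟩ := hfd.exists_log_on_ball hf0
  have hM : 0 < Real.log (max C 1) + 1 := by
    linarith [Real.log_nonneg (le_max_right C 1)]
  have hre : ∀ z ∈ ball (0 : ℂ) 1, (h z).re ≤ Real.log (max C 1) + 1 := fun z hz ↦ by
    have hfz : ‖f z‖ ≤ max C 1 := (hC z hz).trans (le_max_left C 1)
    rw [← Real.log_exp (h z).re, ← Complex.norm_exp, hexp z hz]
    linarith [Real.log_le_log (norm_pos_iff.mpr (hf0 z hz)) hfz]
  exact (HasBoundedLogGrowth.exp_comp fun z hz ↦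
    one_sub_norm_mul_norm_le_of_re_le hM hhd hre hz).congr hexp

theorem MemSmirnov.hasBoundedLogGrowth {φ : ℂ → ℂ} (hφ : MemSmirnov φ)
    (hφ0 : ∀ z ∈ ball (0 : ℂ) 1, φ z ≠ 0) : HasBoundedLogGrowth φ := by
  obtain ⟨f, g, hf, -, hg, hφfg⟩ := hφ
  have hf0 : ∀ z ∈ ball (0 : ℂ) 1, f z ≠ 0 := fun z hz hfz ↦
    hφ0 z hz (by rw [hφfg z hz, hfz, zero_div])
  exact ((hf.hasBoundedLogGrowth hf0).div hg.hasBoundedLogGrowth).congr fun z hz ↦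
    (hφfg z hz).symm

theorem interp_needs_blaschke_factor_general (Λ : ℕ → ℂ) (hΛ : IsInterpolating Λ)
    (w : ℕ → ℂ)
    (hlim : ∀ c : ℝ, ∃ᶠ n in atTop,
      c < (1 - ‖Λ n‖) * |Real.log ‖w n‖|)
    (φ : ℂ → ℂ) (hφ : MemSmirnov φ) (hint : ∀ n, φ (Λ n) = w n) :
    ∃ z ∈ Metric.ball (0 : ℂ) 1, φ z = 0 := by
  by_contra! hφ0
  obtain ⟨K, hK⟩ := hφ.hasBoundedLogGrowth hφ0
  obtain ⟨n, hn⟩ := (hlim K).exists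
  have hbound := hK (Λ n) (hΛ.1 n)
  rw [hint n] at hbound
  linarith

/-- If `Λ` is interpolating, `{wₙ} ⊂ ℂ∖{0}` is bounded and
`limsup (1-|λₙ|)|log|wₙ|| = ∞`, then any Smirnov function interpolating `{wₙ}`
must vanish somewhere on `𝔻`, i.e. have a Blaschke factor. -/
theorem interp_needs_blaschke_factor (Λ : ℕ → ℂ) (hΛ : IsInterpolating Λ)
    (w : ℕ → ℂ) (hw0 : ∀ n, w n ≠ 0)
    (hwb : ∃ M : ℝ, ∀ n, ‖w n‖ ≤ M)
    (hlim : ∀ c : ℝ, ∃ᶠ n in atTop,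
      c < (1 - ‖Λ n‖) * |Real.log ‖w n‖|)
    (φ : ℂ → ℂ) (hφ : MemSmirnov φ) (hint : ∀ n, φ (Λ n) = w n) :
    ∃ z ∈ Metric.ball (0 : ℂ) 1, φ z = 0 :=
  interp_needs_blaschke_factor_general Λ hΛ w hlim φ hφ hint
end

section
/- Let {λₙ} be interpolating, {wₙ} ⊂ ℂ∖{0} bounded with (1−|λₙ|)log|wₙ| ↛ 0, and let φ = F·I ∈ N⁺ with F outer and I inner satisfy φ(λₙ)=wₙ for all n. Then liminf_n |I(λₙ)| = 0. -/
open MeasureTheory Metric Set Filter Topology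

/-- Inner function: bounded analytic on `𝔻` with unimodular radial boundary values a.e. -/
def IsInnerF (I : ℂ → ℂ) : Prop :=
  DifferentiableOn ℂ I (Metric.ball 0 1) ∧
  (∀ z ∈ Metric.ball (0 : ℂ) 1, ‖I z‖ ≤ 1) ∧
  ∀ᵐ (t : ℝ) ∂(volume.restrict (Set.Ioc (-Real.pi) Real.pi)),
    Tendsto (fun r : ℝ => ‖I ((r : ℂ) * Complex.exp ((t : ℂ) * Complex.I))‖)
      (𝓝[<] (1 : ℝ)) (𝓝 1)

/-!
An interpolating sequence is uniformly separated for the pseudo-hyperbolic distance, so it has no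
accumulation point inside the disc and `‖λₙ‖ → 1`. For an outer function `F = exp P[W]`,
`(1 - ‖z‖) log ‖F z‖ = (1 - ‖z‖) Re P[W](z)`, and this tends to `0` as `‖z‖ → 1`: along a
subsequence converging to a point `ζ` of the circle, the kernels `(1 - ‖z‖) P_z(e^{it})` are bounded
by `2` and tend to `0` for every `e^{it} ≠ ζ`, so dominated convergence applies. If `‖I(λₙ)‖`
stayed above some `c > 0`, then `(1 - ‖λₙ‖) log ‖I(λₙ)‖ → 0` too, and adding the two limits gives
`(1 - ‖λₙ‖) log ‖wₙ‖ → 0`.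
-/

open ComplexConjugate in
noncomputable def pseudoHyperbolicDist (a b : ℂ) : ℝ :=
  ‖(a - b) / (1 - conj a * b)‖

section PseudoHyperbolic

open Complex ComplexConjugate

theorem normSq_one_sub_conj_mul_sub_normSq_sub (a b : ℂ) :
    normSq (1 - conj a * b) - normSq (a - b) = (1 - normSq a) * (1 - normSq b) := by
  simp only [normSq_apply, sub_re, sub_im, one_re, one_im, mul_re, mul_im, conj_re, conj_im]
  ring

theorem pseudoHyperbolicDist_le_one {a b : ℂ} (ha : ‖a‖ < 1) (hb : ‖b‖ < 1) :
    pseudoHyperbolicDist a b ≤ 1 := by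
  have ha' : normSq a < 1 := by
    rw [normSq_eq_norm_sq]; exact pow_lt_one₀ (norm_nonneg a) ha two_ne_zero
  have hb' : normSq b < 1 := by
    rw [normSq_eq_norm_sq]; exact pow_lt_one₀ (norm_nonneg b) hb two_ne_zero
  have hgap := mul_pos (sub_pos.2 ha') (sub_pos.2 hb')
  have hle : normSq (a - b) ≤ normSq (1 - conj a * b) := by
    linarith [normSq_one_sub_conj_mul_sub_normSq_sub a b]
  have hden : 0 < normSq (1 - conj a * b) := by
    linarith [normSq_one_sub_conj_mul_sub_normSq_sub a b, normSq_nonneg (a - b)]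
  rw [pseudoHyperbolicDist, norm_div, div_le_one (by simpa using normSq_pos.1 hden)]
  rw [normSq_eq_norm_sq, normSq_eq_norm_sq] at hle
  exact (sq_le_sq₀ (norm_nonneg _) (norm_nonneg _)).1 hle

theorem tendsto_pseudoHyperbolicDist_zero {α : Type*} {l : Filter α} {a b : α → ℂ} {ζ : ℂ}
    (hζ : ‖ζ‖ < 1) (ha : Tendsto a l (𝓝 ζ)) (hb : Tendsto b l (𝓝 ζ)) :
    Tendsto (fun x => pseudoHyperbolicDist (a x) (b x)) l (𝓝 0) := by
  have hden : 1 - conj ζ * ζ ≠ 0 := by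
    rw [conj_mul', sub_ne_zero, ne_comm]
    exact_mod_cast (pow_lt_one₀ (norm_nonneg ζ) hζ two_ne_zero).ne
  have h := ((ha.sub hb).div (tendsto_const_nhds.sub
    (((continuous_conj.tendsto ζ).comp ha).mul hb)) hden).norm
  rwa [sub_self, zero_div, norm_zero] at h

end PseudoHyperbolic

theorem tendsto_norm_one_of_le_pseudoHyperbolicDist {z : ℕ → ℂ} (hz : ∀ n, ‖z n‖ < 1)
    {δ : ℝ} (hδ : 0 < δ) (hsep : ∀ m n, m ≠ n → δ ≤ pseudoHyperbolicDist (z m) (z n)) :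
    Tendsto (fun n => ‖z n‖) atTop (𝓝 1) := by
  refine tendsto_order.2
    ⟨fun r hr => ?_, fun r hr => Eventually.of_forall fun n => (hz n).trans hr⟩
  by_contra h
  simp only [not_eventually, not_lt] at h
  obtain ⟨g, hg, hgr⟩ := extraction_of_frequently_atTop h
  obtain ⟨ζ, hζ, φ, hφ, hlim⟩ := (isCompact_closedBall (0 : ℂ) r).tendsto_subseq
    (x := z ∘ g) fun k => mem_closedBall_zero_iff.2 (hgr k)
  have hζ1 : ‖ζ‖ < 1 := (mem_closedBall_zero_iff.1 hζ).trans_lt hr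
  have hnext : Tendsto (fun k => z (g (φ (k + 1)))) atTop (𝓝 ζ) :=
    hlim.comp (tendsto_add_atTop_nat 1)
  obtain ⟨k, hk⟩ := ((tendsto_pseudoHyperbolicDist_zero hζ1 hlim hnext).eventually
    (gt_mem_nhds hδ)).exists
  exact (hsep _ _ ((hg.comp hφ).injective.ne (Nat.lt_succ_self k).ne)).not_gt hk

theorem tprod_le_of_nonneg_of_le_one {ι : Type*} {f : ι → ℝ} (h0 : ∀ i, 0 ≤ f i)
    (h1 : ∀ i, f i ≤ 1) (i : ι) : ∏' j, f j ≤ f i := by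
  have hbdd : BddBelow (range fun s : Finset ι => ∏ j ∈ s, f j) :=
    ⟨0, by rintro _ ⟨s, rfl⟩; exact Finset.prod_nonneg fun j _ => h0 j⟩
  have hprod : HasProd f (⨅ s : Finset ι, ∏ j ∈ s, f j) :=
    tendsto_atTop_ciInf (Finset.prod_anti_set_of_le_one h0 h1) hbdd
  simpa [hprod.tprod_eq] using ciInf_le hbdd {i}

namespace IsInterpolating

variable {Λ : ℕ → ℂ}

theorem norm_lt_one (hΛ : IsInterpolating Λ) (n : ℕ) : ‖Λ n‖ < 1 :=
  mem_ball_zero_iff.1 (hΛ.1 n)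

theorem exists_le_pseudoHyperbolicDist (hΛ : IsInterpolating Λ) :
    ∃ δ > 0, ∀ m n, m ≠ n → δ ≤ pseudoHyperbolicDist (Λ m) (Λ n) := by
  obtain ⟨δ, hδ, hprod⟩ := hΛ.2.2
  refine ⟨δ, hδ, fun m n hmn => ?_⟩
  have hfactor := tprod_le_of_nonneg_of_le_one
    (f := fun k => if k = n then (1 : ℝ) else pseudoHyperbolicDist (Λ k) (Λ n))
    (fun k => by split_ifs; exacts [zero_le_one, norm_nonneg _])
    (fun k => by
      split_ifs
      · exact le_rfl
      · exact pseudoHyperbolicDist_le_one (hΛ.norm_lt_one k) (hΛ.norm_lt_one n)) m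
  exact (hprod n).trans (hfactor.trans_eq (if_neg hmn))

theorem tendsto_norm_one (hΛ : IsInterpolating Λ) : Tendsto (fun n => ‖Λ n‖) atTop (𝓝 1) := by
  obtain ⟨δ, hδ, hsep⟩ := hΛ.exists_le_pseudoHyperbolicDist
  exact tendsto_norm_one_of_le_pseudoHyperbolicDist hΛ.norm_lt_one hδ hsep

end IsInterpolating

section Poisson

open Complex

variable {W : ℝ → ℝ} {z ζ e : ℂ}

theorem exp_mul_I_sub_ne_zero (hz : z ∈ ball (0 : ℂ) 1) (t : ℝ) : exp (t * I) - z ≠ 0 := by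
  rw [sub_ne_zero]
  rintro rfl
  simp at hz

theorem re_herglotz_eq_poissonKernel (w e : ℂ) :
    ((e + w) / (e - w)).re = poissonKernel 0 w e := by
  simpa [herglotzRieszKernel] using
    (congrFun (poissonKernel_eq_re_herglotzRieszKernel (c := 0) (w := w)) e).symm

theorem continuous_herglotz_exp_mul_I (hz : z ∈ ball (0 : ℂ) 1) :
    Continuous fun t : ℝ => (exp (t * I) + z) / (exp (t * I) - z) :=
  (by fun_prop : Continuous _).div (by fun_prop) (exp_mul_I_sub_ne_zero hz)

theorem continuous_poissonKernel_exp_mul_I (hz : z ∈ ball (0 : ℂ) 1) :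
    Continuous fun t : ℝ => poissonKernel 0 z (exp (t * I)) :=
  (continuous_re.comp (continuous_herglotz_exp_mul_I hz)).congr fun _ =>
    re_herglotz_eq_poissonKernel _ _

theorem re_poissonRep (hW : IntervalIntegrable W volume (-Real.pi) Real.pi)
    (hz : z ∈ ball (0 : ℂ) 1) :
    (poissonRep W z).re
      = (2 * Real.pi)⁻¹ * ∫ t in (-Real.pi)..Real.pi, poissonKernel 0 z (exp (t * I)) * W t := by
  have hint : IntervalIntegrable (fun t : ℝ => (exp (t * I) + z) / (exp (t * I) - z) * (W t : ℂ))
      volume (-Real.pi) Real.pi :=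
    IntervalIntegrable.continuousOn_mul ⟨hW.1.ofReal, hW.2.ofReal⟩
      (continuous_herglotz_exp_mul_I hz).continuousOn
  rw [poissonRep, ← ofReal_ofNat, ← ofReal_mul, ← ofReal_inv, re_ofReal_mul]
  congr 1
  simpa [re_herglotz_eq_poissonKernel] using (intervalIntegral.intervalIntegral_re hint).symm

theorem norm_one_sub_norm_mul_poissonKernel_le (hz : z ∈ ball (0 : ℂ) 1)
    (he : e ∈ sphere (0 : ℂ) 1) :
    ‖(1 - ‖z‖) * poissonKernel 0 z e‖ ≤ 2 := by
  have hz1 : ‖z‖ < 1 := mem_ball_zero_iff.1 hz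
  have hlow := le_re_herglotzRieszKernel he hz
  have hup := re_herglotzRieszKernel_le he hz
  simp only [sub_zero] at hlow hup
  rw [re_herglotz_eq_poissonKernel] at hlow hup
  have hP : 0 ≤ poissonKernel 0 z e := le_trans (by positivity) hlow
  rw [Real.norm_of_nonneg (mul_nonneg (by linarith) hP)]
  calc (1 - ‖z‖) * poissonKernel 0 z e
    _ ≤ (1 - ‖z‖) * ((1 + ‖z‖) / (1 - ‖z‖)) := by gcongr
    _ = 1 + ‖z‖ := mul_div_cancel₀ _ (by linarith)
    _ ≤ 2 := by linarith

theorem tendsto_one_sub_norm_mul_poissonKernel (hζ : ‖ζ‖ = 1) (he : e ≠ ζ) :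
    Tendsto (fun z => (1 - ‖z‖) * poissonKernel 0 z e) (𝓝 ζ) (𝓝 0) := by
  have hden : ‖e - 0 - (ζ - 0)‖ ^ 2 ≠ 0 := by simpa [sub_eq_zero] using he
  have hcont : ContinuousAt (fun z => (1 - ‖z‖) * poissonKernel 0 z e) ζ := by
    unfold poissonKernel
    fun_prop (disch := exact hden)
  simpa [hζ] using hcont.tendsto

theorem volume_setOf_exp_mul_I_eq (ζ : ℂ) : volume {t : ℝ | exp (t * I) = ζ} = 0 := by
  refine Set.Countable.measure_zero ?_ _
  rcases Set.eq_empty_or_nonempty {t : ℝ | exp (t * I) = ζ} with h | ⟨t₀, ht₀⟩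
  · simp [h]
  refine (Set.countable_range fun m : ℤ => t₀ + m * (2 * Real.pi)).mono fun t ht => ?_
  have hexp : Circle.exp t = Circle.exp t₀ :=
    Subtype.ext (by simpa [Circle.coe_exp] using ht.trans ht₀.symm)
  obtain ⟨m, hm⟩ := Circle.exp_eq_exp.1 hexp
  exact ⟨m, hm.symm⟩

theorem tendsto_one_sub_norm_mul_re_poissonRep_nhdsWithin
    (hW : IntervalIntegrable W volume (-Real.pi) Real.pi) (hζ : ‖ζ‖ = 1) :
    Tendsto (fun z => (1 - ‖z‖) * (poissonRep W z).re) (𝓝[ball 0 1] ζ) (𝓝 0) := by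
  have hrep : (fun z => (2 * Real.pi)⁻¹ * ∫ t in (-Real.pi)..Real.pi,
        (1 - ‖z‖) * poissonKernel 0 z (exp (t * I)) * W t)
      =ᶠ[𝓝[ball 0 1] ζ] fun z => (1 - ‖z‖) * (poissonRep W z).re :=
    eventually_nhdsWithin_of_forall fun z hz => by
      dsimp only
      rw [re_poissonRep hW hz, mul_left_comm (1 - ‖z‖),
        ← intervalIntegral.integral_const_mul (1 - ‖z‖)]
      simp only [mul_assoc]
  refine Tendsto.congr' hrep ?_
  have hdom := intervalIntegral.tendsto_integral_filter_of_dominated_convergence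
    (μ := volume) (f := fun _ => (0 : ℝ))
    (F := fun z t => (1 - ‖z‖) * poissonKernel 0 z (exp (t * I)) * W t) (fun t => 2 * |W t|)
    (eventually_nhdsWithin_of_forall fun z hz =>
      ((continuous_const.mul (continuous_poissonKernel_exp_mul_I hz)).aestronglyMeasurable).mul
        hW.def'.aestronglyMeasurable)
    (eventually_nhdsWithin_of_forall fun z hz => ae_of_all _ fun t _ => by
      rw [norm_mul, Real.norm_eq_abs (W t)]
      exact mul_le_mul_of_nonneg_right
        (norm_one_sub_norm_mul_poissonKernel_le hz (by simp)) (abs_nonneg _))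
    (hW.norm.const_mul 2)
    ((measure_eq_zero_iff_ae_notMem.1 (volume_setOf_exp_mul_I_eq ζ)).mono fun t ht _ => by
      simpa using ((tendsto_one_sub_norm_mul_poissonKernel hζ ht).mono_left
        nhdsWithin_le_nhds).mul_const (W t))
  simpa using hdom.const_mul (2 * Real.pi)⁻¹

theorem tendsto_one_sub_norm_mul_re_poissonRep
    (hW : IntervalIntegrable W volume (-Real.pi) Real.pi) {z : ℕ → ℂ}
    (hz : ∀ n, z n ∈ ball (0 : ℂ) 1) (hz1 : Tendsto (fun n => ‖z n‖) atTop (𝓝 1)) :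
    Tendsto (fun n => (1 - ‖z n‖) * (poissonRep W (z n)).re) atTop (𝓝 0) := by
  refine tendsto_of_subseq_tendsto fun ns hns => ?_
  obtain ⟨ζ, -, φ, hφ, hlim⟩ := (isCompact_closedBall (0 : ℂ) 1).tendsto_subseq
    (x := z ∘ ns) fun k => ball_subset_closedBall (hz (ns k))
  have hζ : ‖ζ‖ = 1 := tendsto_nhds_unique hlim.norm (hz1.comp (hns.comp hφ.tendsto_atTop))
  exact ⟨φ, (tendsto_one_sub_norm_mul_re_poissonRep_nhdsWithin hW hζ).comp
    (tendsto_nhdsWithin_iff.2 ⟨hlim, Eventually.of_forall fun k => hz _⟩)⟩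

end Poisson

namespace IsOuterF

variable {F : ℂ → ℂ} {z : ℂ}

theorem ne_zero (hF : IsOuterF F) (hz : z ∈ ball (0 : ℂ) 1) : F z ≠ 0 := by
  obtain ⟨W, -, hFW⟩ := hF
  rw [hFW z hz]
  exact Complex.exp_ne_zero _

theorem tendsto_one_sub_norm_mul_log_norm (hF : IsOuterF F) {z : ℕ → ℂ}
    (hz : ∀ n, z n ∈ ball (0 : ℂ) 1) (hz1 : Tendsto (fun n => ‖z n‖) atTop (𝓝 1)) :
    Tendsto (fun n => (1 - ‖z n‖) * Real.log ‖F (z n)‖) atTop (𝓝 0) := by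
  obtain ⟨W, hW, hFW⟩ := hF
  refine (tendsto_one_sub_norm_mul_re_poissonRep hW hz hz1).congr fun n => ?_
  rw [hFW _ (hz n), Complex.norm_exp, Real.log_exp]

end IsOuterF

theorem Filter.Tendsto.zero_mul_log {ι : Type*} {l : Filter ι} {a u : ι → ℝ} {c : ℝ}
    (ha : Tendsto a l (𝓝 0)) (hc : 0 < c) (hu : ∀ᶠ i in l, c ≤ u i ∧ u i ≤ 1) :
    Tendsto (fun i => a i * Real.log (u i)) l (𝓝 0) := by
  refine ha.zero_mul_isBoundedUnder_le ⟨-Real.log c, eventually_map.2 (hu.mono fun i hi => ?_)⟩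
  show ‖Real.log (u i)‖ ≤ -Real.log c
  rw [Real.norm_eq_abs, abs_of_nonpos (Real.log_nonpos (hc.le.trans hi.1) hi.2), neg_le_neg_iff]
  exact Real.log_le_log hc hi.1

theorem exists_pos_eventually_le_of_liminf_ne_zero {ι : Type*} {l : Filter ι} [l.NeBot]
    {u : ι → ℝ} (h0 : ∀ i, 0 ≤ u i) (hb : IsBoundedUnder (· ≤ ·) l u) (hL : liminf u l ≠ 0) :
    ∃ c > 0, ∀ᶠ i in l, c ≤ u i := by
  have hpos : 0 < liminf u l :=
    (le_liminf_of_le hb.isCoboundedUnder_ge (Eventually.of_forall h0)).lt_of_ne' hL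
  exact ⟨_, half_pos hpos, (eventually_lt_of_lt_liminf (half_lt_self hpos)
    (isBoundedUnder_of ⟨0, h0⟩)).mono fun _ => le_of_lt⟩

theorem inner_factor_small_on_interp_general (Λ : ℕ → ℂ) (hΛ : IsInterpolating Λ)
    (w : ℕ → ℂ)
    (hnot : ¬ Tendsto
      (fun n => (1 - ‖Λ n‖) * Real.log (‖w n‖)) atTop (𝓝 0))
    (F I : ℂ → ℂ) (hF : IsOuterF F) (hI : IsInnerF I)
    (hint : ∀ n, F (Λ n) * I (Λ n) = w n) :
    Filter.liminf (fun n => ‖I (Λ n)‖) atTop = 0 := by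
  have hI1 : ∀ n, ‖I (Λ n)‖ ≤ 1 := fun n => hI.2.1 _ (hΛ.1 n)
  by_contra hL
  obtain ⟨c, hc, hcI⟩ := exists_pos_eventually_le_of_liminf_ne_zero (fun n => norm_nonneg _)
    (isBoundedUnder_of ⟨1, hI1⟩) hL
  have hΛ1 := hΛ.tendsto_norm_one
  have hinner : Tendsto (fun n => (1 - ‖Λ n‖) * Real.log ‖I (Λ n)‖) atTop (𝓝 0) :=
    Tendsto.zero_mul_log (by simpa using (tendsto_const_nhds (x := (1 : ℝ))).sub hΛ1) hc
      (hcI.mono fun n hn => ⟨hn, hI1 n⟩)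
  have houter := hF.tendsto_one_sub_norm_mul_log_norm hΛ.1 hΛ1
  have hsum := houter.add hinner
  rw [add_zero] at hsum
  refine hnot (hsum.congr' ?_)
  filter_upwards [hcI] with n hn
  rw [← hint n, norm_mul, Real.log_mul (norm_ne_zero_iff.2 (hF.ne_zero (hΛ.1 n)))
    (hc.trans_le hn).ne', mul_add]

/-- If `Λ` is interpolating, `{wₙ} ⊂ ℂ∖{0}` is bounded with
`(1-|λₙ|)log|wₙ| ↛ 0`, and `φ = F·I` (with `F` outer, `I` inner) satisfies
`φ(λₙ) = wₙ`, then `liminf |I(λₙ)| = 0`. -/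
theorem inner_factor_small_on_interp (Λ : ℕ → ℂ) (hΛ : IsInterpolating Λ)
    (w : ℕ → ℂ) (hw0 : ∀ n, w n ≠ 0)
    (hwb : ∃ M : ℝ, ∀ n, ‖w n‖ ≤ M)
    (hnot : ¬ Tendsto
      (fun n => (1 - ‖Λ n‖) * Real.log (‖w n‖)) atTop (𝓝 0))
    (F I : ℂ → ℂ) (hF : IsOuterF F) (hI : IsInnerF I)
    (hint : ∀ n, F (Λ n) * I (Λ n) = w n) :
    Filter.liminf (fun n => ‖I (Λ n)‖) atTop = 0 :=
  inner_factor_small_on_interp_general Λ hΛ w hnot F I hF hI hint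
end
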